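/- For a pure state the partial transposition criterion is necessary and sufficient: for a unit vector ψ in ℂ^{d_A} ⊗ ℂ^{d_B}, the partial transposition (ψψ*)^{T_B} of the rank-one projector ψψ* is positive semidefinite if and only if ψ is a product vector x ⊗ y. In particular, if ψ is not a product vector then (ψψ*)^{T_B} has a negative eigenvalue. -/

import Mathlib

open scoped BigOperators ComplexOrder

/-- The tensor product of two vectors, `(x ⊗ y)(a,b) = x a * y b`. -/
def tensorVec {dA dB : ℕ} (x : Fin dA → ℂ) (y : Fin dB → ℂ) :
    Fin dA × Fin dB → ℂ :=
  fun p => x p.1 * y p.2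

/-- The rank-one matrix `ψ ψ*`, with entries `(ψ ψ*)_{uv} = ψ u * conj (ψ v)`. -/
def vecProjector {ι : Type*} (ψ : ι → ℂ) : Matrix ι ι ℂ :=
  fun u v => ψ u * (starRingEnd ℂ) (ψ v)

/-- Partial transposition with respect to the second factor:
`(ρ^{T_B})_{(i,μ),(j,ν)} = ρ_{(i,ν),(j,μ)}`. -/
def partialTransposeB {dA dB : ℕ}
    (ρ : Matrix (Fin dA × Fin dB) (Fin dA × Fin dB) ℂ) :
    Matrix (Fin dA × Fin dB) (Fin dA × Fin dB) ℂ :=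
  fun p q => ρ (p.1, q.2) (q.1, p.2)

/-!
Partial transposition turns the projector onto a product vector `x ⊗ y` into the projector
onto `x ⊗ ȳ`, which is positive semidefinite. Conversely, `ψ` is a product vector as soon as all
its `2 × 2` minors `ψ(i,μ) ψ(j,ν) - ψ(i,ν) ψ(j,μ)` vanish, and on a suitable vector supported on
the four entries of a minor the quadratic form of `(ψψ*)^{T_B}` equals `-2` times the squared
modulus of that minor. So positivity of the partial transpose forces every minor to vanish, and
a Hermitian matrix that is not positive semidefinite has a negative eigenvalue.
-/

open Matrix

lemma Matrix.IsHermitian.exists_neg_eigenvector_of_not_posSemidef {𝕜 n : Type*} [RCLike 𝕜]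
    [Fintype n] {A : Matrix n n 𝕜} (hA : A.IsHermitian) (h : ¬ A.PosSemidef) :
    ∃ (t : ℝ) (v : n → 𝕜), t < 0 ∧ v ≠ 0 ∧ A *ᵥ v = t • v := by
  classical
  obtain ⟨i, hi⟩ : ∃ i, hA.eigenvalues i < 0 := by
    by_contra! hall
    exact h (hA.posSemidef_iff_eigenvalues_nonneg.mpr fun i => hall i)
  exact ⟨_, _, hi, (WithLp.ofLp_eq_zero 2).ne.2 <| hA.eigenvectorBasis.orthonormal.ne_zero i,
    hA.mulVec_eigenvectorBasis i⟩

lemma posSemidef_vecProjector {ι : Type*} [Fintype ι] (ψ : ι → ℂ) :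
    (vecProjector ψ).PosSemidef :=
  posSemidef_vecMulVec_self_star ψ

lemma Matrix.IsHermitian.partialTransposeB {dA dB : ℕ}
    {ρ : Matrix (Fin dA × Fin dB) (Fin dA × Fin dB) ℂ} (hρ : ρ.IsHermitian) :
    (partialTransposeB ρ).IsHermitian := by
  ext p q
  exact congrFun₂ hρ (p.1, q.2) (q.1, p.2)

lemma partialTransposeB_vecProjector_tensorVec {dA dB : ℕ} (x : Fin dA → ℂ) (y : Fin dB → ℂ) :
    partialTransposeB (vecProjector (tensorVec x y)) = vecProjector (tensorVec x (star y)) := by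
  ext p q
  simp only [partialTransposeB, vecProjector, tensorVec, Pi.star_apply, Complex.star_def,
    map_mul, Complex.conj_conj]
  ring

lemma exists_eq_tensorVec_of_minors_eq_zero {dA dB : ℕ} (ψ : Fin dA × Fin dB → ℂ)
    (h : ∀ (i j : Fin dA) (μ ν : Fin dB), ψ (i, μ) * ψ (j, ν) = ψ (i, ν) * ψ (j, μ)) :
    ∃ (x : Fin dA → ℂ) (y : Fin dB → ℂ), ψ = tensorVec x y := by
  by_cases h0 : ψ = 0
  · exact ⟨0, 0, funext fun p => by simp [tensorVec, h0]⟩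
  obtain ⟨⟨i₀, μ₀⟩, hp⟩ := Function.ne_iff.mp h0
  refine ⟨fun a => ψ (a, μ₀), fun b => ψ (i₀, b) / ψ (i₀, μ₀), funext fun ⟨a, b⟩ => ?_⟩
  rw [tensorVec, mul_div_assoc', eq_div_iff hp]
  linear_combination -h a i₀ μ₀ b

def minorTestVec {dA dB : ℕ} (ψ : Fin dA × Fin dB → ℂ) (i j : Fin dA) (μ ν : Fin dB) :
    Fin dA × Fin dB → ℂ :=
  Pi.single (i, μ) (ψ (i, ν)) + Pi.single (i, ν) (-ψ (i, μ))
    + Pi.single (j, μ) (ψ (j, ν)) + Pi.single (j, ν) (-ψ (j, μ))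

lemma dotProduct_partialTransposeB_vecProjector_minorTestVec {dA dB : ℕ}
    (ψ : Fin dA × Fin dB → ℂ) (i j : Fin dA) (μ ν : Fin dB) :
    star (minorTestVec ψ i j μ ν) ⬝ᵥ
        (partialTransposeB (vecProjector ψ) *ᵥ minorTestVec ψ i j μ ν) =
      ((-2 * Complex.normSq (ψ (i, μ) * ψ (j, ν) - ψ (i, ν) * ψ (j, μ)) : ℝ) : ℂ) := by
  classical
  rw [Complex.ofReal_mul, ← Complex.mul_conj]
  simp only [minorTestVec, star_add, ← Pi.single_star, mulVec_add, mulVec_single,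
    add_dotProduct, single_dotProduct, Pi.add_apply, Pi.smul_apply, op_smul_eq_mul, col_apply,
    partialTransposeB, vecProjector, Complex.star_def, map_mul, map_sub, map_neg]
  push_cast
  ring

lemma minor_eq_zero_of_posSemidef_partialTransposeB {dA dB : ℕ} {ψ : Fin dA × Fin dB → ℂ}
    (h : (partialTransposeB (vecProjector ψ)).PosSemidef) (i j : Fin dA) (μ ν : Fin dB) :
    ψ (i, μ) * ψ (j, ν) = ψ (i, ν) * ψ (j, μ) := by
  have hform := h.dotProduct_mulVec_nonneg (minorTestVec ψ i j μ ν)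
  rw [dotProduct_partialTransposeB_vecProjector_minorTestVec, Complex.zero_le_real] at hform
  have hminor : Complex.normSq (ψ (i, μ) * ψ (j, ν) - ψ (i, ν) * ψ (j, μ)) = 0 := by
    linarith [Complex.normSq_nonneg (ψ (i, μ) * ψ (j, ν) - ψ (i, ν) * ψ (j, μ))]
  exact sub_eq_zero.mp (Complex.normSq_eq_zero.mp hminor)

lemma posSemidef_partialTransposeB_vecProjector_iff {dA dB : ℕ} (ψ : Fin dA × Fin dB → ℂ) :
    (partialTransposeB (vecProjector ψ)).PosSemidef ↔
      ∃ (x : Fin dA → ℂ) (y : Fin dB → ℂ), ψ = tensorVec x y := by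
  refine ⟨fun h => exists_eq_tensorVec_of_minors_eq_zero ψ
    (minor_eq_zero_of_posSemidef_partialTransposeB h), ?_⟩
  rintro ⟨x, y, rfl⟩
  rw [partialTransposeB_vecProjector_tensorVec]
  exact posSemidef_vecProjector _

theorem pure_state_ppt_iff_product_general (dA dB : ℕ)
    (ψ : Fin dA × Fin dB → ℂ) :
    ((partialTransposeB (vecProjector ψ)).PosSemidef ↔
      ∃ (x : Fin dA → ℂ) (y : Fin dB → ℂ), ψ = tensorVec x y) ∧
    ((¬ ∃ (x : Fin dA → ℂ) (y : Fin dB → ℂ), ψ = tensorVec x y) →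
      ∃ (lam : ℝ) (v : Fin dA × Fin dB → ℂ), lam < 0 ∧ v ≠ 0 ∧
        (partialTransposeB (vecProjector ψ)).mulVec v = (lam : ℂ) • v) := by
  refine ⟨posSemidef_partialTransposeB_vecProjector_iff ψ, fun hnot => ?_⟩
  have hHerm := (posSemidef_vecProjector ψ).isHermitian.partialTransposeB
  obtain ⟨t, v, ht, hv, hAv⟩ := hHerm.exists_neg_eigenvector_of_not_posSemidef
    (mt (posSemidef_partialTransposeB_vecProjector_iff ψ).mp hnot)
  exact ⟨t, v, ht, hv, by rw [hAv, Complex.coe_smul]⟩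

/-- **For pure states the partial transposition criterion is necessary and sufficient.**
For a unit vector `ψ` in `ℂ^{d_A} ⊗ ℂ^{d_B}`, the partial transposition `(ψψ*)^{T_B}` of the
rank-one projector `ψψ*` is positive semidefinite if and only if `ψ` is a product vector
`x ⊗ y`. In particular, if `ψ` is not a product vector then `(ψψ*)^{T_B}` has a negative
eigenvalue. -/
theorem pure_state_ppt_iff_product (dA dB : ℕ)
    (ψ : Fin dA × Fin dB → ℂ)
    (hψ : ∑ p : Fin dA × Fin dB, Complex.normSq (ψ p) = 1) :
    ((partialTransposeB (vecProjector ψ)).PosSemidef ↔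
      ∃ (x : Fin dA → ℂ) (y : Fin dB → ℂ), ψ = tensorVec x y) ∧
    ((¬ ∃ (x : Fin dA → ℂ) (y : Fin dB → ℂ), ψ = tensorVec x y) →
      ∃ (lam : ℝ) (v : Fin dA × Fin dB → ℂ), lam < 0 ∧ v ≠ 0 ∧
        (partialTransposeB (vecProjector ψ)).mulVec v = (lam : ℂ) • v) :=
  pure_state_ppt_iff_product_general dA dB ψ
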